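/- arXiv:1909.05887 — 2 statements merged into one kernel-verified Lean document; each statement's English description precedes it below -/
import Mathlib

section
/- For a finite set of cardinality n and any j with 1 ≤ j ≤ n, the number of idempotent functions f on the set whose fixed point set has exactly j elements is C(n, j) · j^(n−j). -/
/-!
An idempotent map is the same as a retraction onto its fixed point set `T`: it fixes `T`
pointwise and maps everything into `T`. Such retractions correspond to arbitrary maps
`Tᶜ → T`, so there are `j ^ (n - j)` of them when `|T| = j`, and there are `C(n, j)` choices
of `T`.
-/

open Function

section Retraction

variable {S : Type*}

theorem idempotent_and_fixedPoints_eq_iff {f : S → S} {T : Set S} :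
    f ∘ f = f ∧ fixedPoints f = T ↔ (∀ x ∈ T, f x = x) ∧ ∀ x, f x ∈ T := by
  constructor
  · rintro ⟨hidem, rfl⟩
    exact ⟨fun x hx => hx, fun x => congrFun hidem x⟩
  · rintro ⟨hfix, hmaps⟩
    exact ⟨funext fun x => hfix _ (hmaps x),
      Set.ext fun x => ⟨fun hx => hx ▸ hmaps x, hfix x⟩⟩

def retractionEquivFunCompl (T : Set S) [DecidablePred (· ∈ T)] :
    {f : S → S // (∀ x ∈ T, f x = x) ∧ ∀ x, f x ∈ T} ≃ (↥Tᶜ → ↥T) where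
  toFun f x := ⟨f.1 x, f.2.2 x⟩
  invFun g := ⟨fun x => if h : x ∈ T then x else g ⟨x, h⟩,
    fun _ hx => dif_pos hx, fun x => by dsimp only; split_ifs with h; exacts [h, (g _).2]⟩
  left_inv f := Subtype.ext <| funext fun x => by
    dsimp only; split_ifs with h; exacts [(f.2.1 x h).symm, rfl]
  right_inv g := funext fun x => Subtype.ext (dif_neg x.2)

theorem card_idempotent_fixedPoints_eq [Fintype S] (T : Finset S) :
    Nat.card {f : S → S // f ∘ f = f ∧ fixedPoints f = T} =
      T.card ^ (Fintype.card S - T.card) := by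
  classical
  rw [Nat.card_congr ((Equiv.subtypeEquivRight fun _ => idempotent_and_fixedPoints_eq_iff).trans
      (retractionEquivFunCompl _)), Nat.card_fun, Nat.card_coe_set_eq, Set.ncard_coe_finset,
    ← Finset.coe_compl, Nat.card_coe_set_eq, Set.ncard_coe_finset, Finset.card_compl]

end Retraction

theorem card_idempotent_with_fix_card_general {S : Type*} [Fintype S] {n j : ℕ}
    (hcard : Fintype.card S = n) :
    Nat.card {f : S → S // f ∘ f = f ∧ Set.ncard {x | f x = x} = j} =
      Nat.choose n j * j ^ (n - j) := by
  classical
  subst hcard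
  let fixedFinset (f : {f : S → S // f ∘ f = f ∧ Set.ncard {x | f x = x} = j}) :
      {T : Finset S // T.card = j} :=
    ⟨(fixedPoints f.1).toFinset, by rw [← Set.ncard_eq_toFinset_card']; exact f.2.2⟩
  have card_fiber (T : {T : Finset S // T.card = j}) :
      Nat.card {f // fixedFinset f = T} = j ^ (Fintype.card S - j) := by
    have card_eq := card_idempotent_fixedPoints_eq T.1
    rw [T.2] at card_eq
    rw [← card_eq]
    refine Nat.card_congr ((Equiv.subtypeEquivRight fun f => ?_).trans
      (Equiv.subtypeSubtypeEquivSubtype fun {f} hf => ⟨hf.1, ?_⟩))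
    · simp [fixedFinset, Subtype.ext_iff, ← Finset.coe_inj, f.2.1]
    · exact (congrArg Set.ncard hf.2).trans ((Set.ncard_coe_finset _).trans T.2)
  rw [← Nat.card_congr (Equiv.sigmaFiberEquiv fixedFinset), Nat.card_sigma,
    Finset.sum_congr rfl fun T _ => card_fiber T, Finset.sum_const, Finset.card_univ,
    Fintype.card_finset_len, smul_eq_mul]

theorem card_idempotent_with_fix_card {S : Type*} [Fintype S] {n j : ℕ}
    (hcard : Fintype.card S = n) (hj1 : 1 ≤ j) (hjn : j ≤ n) :
    Nat.card {f : S → S // f ∘ f = f ∧ Set.ncard {x | f x = x} = j} =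
      Nat.choose n j * j ^ (n - j) :=
  card_idempotent_with_fix_card_general hcard
end

section
/- The number of idempotent functions on a finite set of cardinality n ≥ 1 equals the sum over j from 1 to n of C(n, j) · j^(n−j). -/
/-!
An idempotent `f` is a retraction onto its set of fixed points `T = f(S)`, and conversely any
map from `S \ T` into `T`, extended by the identity on `T`, is an idempotent with fixed-point
set `T`. Hence the idempotents with fixed-point set `T` are counted by `|T| ^ (n - |T|)`, and
grouping the subsets `T` by size gives the sum; the empty `T` contributes `0 ^ n = 0`.
-/

open Finset

section

variable {S : Type*} [DecidableEq S]

def extendByIdOn (T : Finset S) (g : {x // x ∉ T} → {x // x ∈ T}) (x : S) : S :=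
  if h : x ∈ T then x else g ⟨x, h⟩

theorem extendByIdOn_comp_self (T : Finset S) (g : {x // x ∉ T} → {x // x ∈ T}) :
    extendByIdOn T g ∘ extendByIdOn T g = extendByIdOn T g := by
  funext x
  by_cases hx : x ∈ T
  · simp [extendByIdOn, hx]
  · simp [extendByIdOn, hx, (g ⟨x, hx⟩).2]

variable [Fintype S]

def fixedPointFinset (f : S → S) : Finset S := univ.filter fun x => f x = x

theorem mem_fixedPointFinset {f : S → S} {x : S} : x ∈ fixedPointFinset f ↔ f x = x := by
  simp [fixedPointFinset]

theorem apply_mem_fixedPointFinset_of_idempotent {f : S → S} (hf : f ∘ f = f) (x : S) :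
    f x ∈ fixedPointFinset f :=
  mem_fixedPointFinset.2 (congrFun hf x)

theorem fixedPointFinset_extendByIdOn (T : Finset S) (g : {x // x ∉ T} → {x // x ∈ T}) :
    fixedPointFinset (extendByIdOn T g) = T := by
  ext x
  rw [mem_fixedPointFinset]
  by_cases hx : x ∈ T
  · simp [extendByIdOn, hx]
  · simp only [extendByIdOn, hx, dite_false, iff_false]
    exact fun h => hx (h ▸ (g ⟨x, hx⟩).2)

def idempotentWithFixedPointsEquiv (T : Finset S) :
    {f : {f : S → S // f ∘ f = f} // fixedPointFinset f.1 = T} ≃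
      ({x // x ∉ T} → {x // x ∈ T}) where
  toFun f x := ⟨f.1.1 x, (f.2 ▸ apply_mem_fixedPointFinset_of_idempotent f.1.2 x :)⟩
  invFun g := ⟨⟨extendByIdOn T g, extendByIdOn_comp_self T g⟩, fixedPointFinset_extendByIdOn T g⟩
  left_inv := by
    rintro ⟨⟨f, _⟩, rfl⟩
    ext x
    by_cases hx : x ∈ fixedPointFinset f
    · simp [extendByIdOn, hx, mem_fixedPointFinset.1 hx]
    · simp [extendByIdOn, hx]
  right_inv g := by
    funext x
    simp [extendByIdOn, x.2]

theorem card_idempotent_eq_sum_finset :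
    Nat.card {f : S → S // f ∘ f = f} = ∑ T : Finset S, #T ^ (Fintype.card S - #T) := by
  rw [← Nat.card_congr (Equiv.sigmaFiberEquiv fun f : {f : S → S // f ∘ f = f} =>
    fixedPointFinset f.1), Nat.card_sigma]
  refine sum_congr rfl fun T _ => ?_
  rw [Nat.card_congr (idempotentWithFixedPointsEquiv T), Nat.card_fun, Nat.card_eq_fintype_card,
    Nat.card_eq_fintype_card, Fintype.card_subtype_compl, Fintype.card_coe]

end

theorem card_idempotent {S : Type*} [Fintype S] {n : ℕ}
    (hcard : Fintype.card S = n) (hn : 1 ≤ n) :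
    Nat.card {f : S → S // f ∘ f = f} =
      ∑ j ∈ Finset.Icc 1 n, Nat.choose n j * j ^ (n - j) := by
  classical
  rw [card_idempotent_eq_sum_finset, ← powerset_univ, sum_powerset_apply_card
    (fun j => j ^ (Fintype.card S - j)), card_univ, hcard]
  refine (sum_subset (fun j hj => ?_) fun j hrange hj => ?_).symm
  · simp only [mem_Icc, mem_range] at hj ⊢
    omega
  · obtain rfl : j = 0 := by simp only [mem_Icc, mem_range] at hj hrange; omega
    simp [Nat.pos_iff_ne_zero.1 hn]
end
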